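/- With η a finite positive measure on a compact set E, λ ∉ E, d = dist(λ, E), for z ∉ D(λ, d/2) and 0 < ε < d/2 one has |(C_ε(η)(z) − C(η)(λ))/(z − λ)| ≤ 4/d, where C_ε(η) is the truncated Cauchy transform, C(η)(λ) = ∫ (s−λ)⁻¹ dη(s), provided ‖C_ε(η)‖_∞ ≤ 1 and |C(η)(λ)| ≤ 1. -/

import Mathlib

open MeasureTheory Set

lemma norm_sub_div_le_of_norm_le_one {𝕜 : Type*} [NormedField 𝕜] {a b x : 𝕜} {r : ℝ}
    (ha : ‖a‖ ≤ 1) (hb : ‖b‖ ≤ 1) (hr : 0 < r) (hx : r ≤ ‖x‖) :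
    ‖(a - b) / x‖ ≤ 2 / r := by
  rw [norm_div]
  calc ‖a - b‖ / ‖x‖ ≤ 2 / ‖x‖ := by
        gcongr
        linarith [norm_sub_le a b]
    _ ≤ 2 / r := by gcongr

theorem cauchy_difference_quotient_bound_far_general
    (η : Measure ℂ)
    (lam : ℂ) (d : ℝ)
    (hdpos : 0 < d)
    (hCbd : ∀ (w : ℂ) (ε : ℝ), 0 < ε →
      ‖(∫ s in {u : ℂ | ε < ‖(u - w)‖}, (s - w)⁻¹ ∂η)‖ ≤ 1)
    (hClam : ‖(∫ s, (s - lam)⁻¹ ∂η)‖ ≤ 1) :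
    ∀ z : ℂ, z ∉ Metric.ball lam (d / 2) → ∀ ε : ℝ, 0 < ε → ε < d / 2 →
      ‖
        (((∫ s in {w : ℂ | ε < ‖(w - z)‖}, (s - z)⁻¹ ∂η) -
          ∫ s, (s - lam)⁻¹ ∂η) / (z - lam))‖ ≤ 4 / d := by
  intro z hz ε hε _
  have hfar : d / 2 ≤ ‖z - lam‖ := by
    simpa [Metric.mem_ball, dist_eq_norm] using hz
  calc _ ≤ 2 / (d / 2) :=
        norm_sub_div_le_of_norm_le_one (hCbd z ε hε) hClam (half_pos hdpos) hfar
    _ = 4 / d := by ring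

/-- Second difference-quotient bound from the proof of Lemma 5.1: with η a finite
positive measure on the compact set E, λ ∉ E, d = dist(λ,E), if the truncated
Cauchy transforms of η are bounded by 1 and |C(η)(λ)| ≤ 1, then for z ∉ D(λ,d/2)
and 0 < ε < d/2, |(C_ε(η)(z) − C(η)(λ))/(z − λ)| ≤ 4/d. -/
theorem cauchy_difference_quotient_bound_far
    (η : Measure ℂ) [IsFiniteMeasure η]
    (E : Set ℂ) (hE : IsCompact E) (hsupp : η Eᶜ = 0) (hEne : E.Nonempty)
    (lam : ℂ) (hlam : lam ∉ E) (d : ℝ) (hd : d = Metric.infDist lam E)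
    (hdpos : 0 < d)
    (hCbd : ∀ (w : ℂ) (ε : ℝ), 0 < ε →
      ‖(∫ s in {u : ℂ | ε < ‖(u - w)‖}, (s - w)⁻¹ ∂η)‖ ≤ 1)
    (hClam : ‖(∫ s, (s - lam)⁻¹ ∂η)‖ ≤ 1) :
    ∀ z : ℂ, z ∉ Metric.ball lam (d / 2) → ∀ ε : ℝ, 0 < ε → ε < d / 2 →
      ‖
        (((∫ s in {w : ℂ | ε < ‖(w - z)‖}, (s - z)⁻¹ ∂η) -
          ∫ s, (s - lam)⁻¹ ∂η) / (z - lam))‖ ≤ 4 / d :=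
  cauchy_difference_quotient_bound_far_general η lam d hdpos hCbd hClam
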